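/- arXiv:1809.00570 — 7 statements merged into one kernel-verified Lean document; each statement's English description precedes it below -/
import Mathlib

section
/- Let H ⊆ F be a submonoid of a factorial monoid F with H^× = H ∩ F^× and suppose the reduced class semigroup C*(H,F) is finite (i.e., H is a C-monoid). If C*(H,F) is a union of groups, then H is seminormal. -/
/-- The factorial monoid `F = F^× × ℱ(P)`, with unit group `Fu` and free
abelian monoid `ℱ(P)` modeled by `Multiplicative (P →₀ ℕ)`. -/
abbrev FM (Fu P : Type*) [CommGroup Fu] : Type _ := Fu × Multiplicative (P →₀ ℕ)

/-- `H`-equivalence on `F`: `y ~ y'` iff for all `x ∈ F`, `x*y ∈ H ↔ x*y' ∈ H`. -/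
def HRel {M : Type*} [CommMonoid M] (H : Submonoid M) (y y' : M) : Prop :=
  ∀ x : M, x * y ∈ H ↔ x * y' ∈ H

/-- `y ∈ (F \ F^×) ∪ {1}`: the representatives of the reduced class semigroup. -/
def NU1 {M : Type*} [Monoid M] (y : M) : Prop := ¬ IsUnit y ∨ y = 1

/-- The reduced class semigroup `C*(H,F)` is finite: there are finitely many
`H`-equivalence classes of elements of `(F \ F^×) ∪ {1}`. -/
def CStarFinite {M : Type*} [CommMonoid M] (H : Submonoid M) : Prop :=
  ∃ (n : ℕ) (f : Fin n → M), ∀ y : M, NU1 y → ∃ i : Fin n, HRel H y (f i)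

/-- `C*(H,F)` is a union of groups: each class `[y]` lies in some subgroup,
i.e. in the constituent group of some idempotent `[e]`: `[e] + [e] = [e]`,
`[y] + [e] = [y]` and `[y] + [z] = [e]` for some class `[z]`. -/
def CStarUnionOfGroups {M : Type*} [CommMonoid M] (H : Submonoid M) : Prop :=
  ∀ y : M, NU1 y → ∃ e : M, NU1 e ∧ HRel H (e * e) e ∧ HRel H (y * e) y ∧
    ∃ z : M, NU1 z ∧ HRel H (y * z) e

/-- `H^× = H ∩ F^×`: every element of `H` which is invertible in `F` has its
inverse in `H`. -/
def UnitsCond {M : Type*} [Monoid M] (H : Submonoid M) : Prop :=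
  ∀ u : Mˣ, (u : M) ∈ H → ((u⁻¹ : Mˣ) : M) ∈ H

/-- `H` is seminormal: for `x = a/b ∈ q(H)` (`a, b ∈ H`) with `x^n ∈ H` for all
sufficiently large `n` (i.e. `a^n = h_n * b^n` with `h_n ∈ H`), one has `x ∈ H`
(i.e. `a = h * b` with `h ∈ H`). -/
def SeminormalSub {M : Type*} [CommMonoid M] (H : Submonoid M) : Prop :=
  ∀ a b : M, a ∈ H → b ∈ H → (∃ m : ℕ, ∀ n ≥ m, ∃ h ∈ H, a ^ n = h * b ^ n) →
    ∃ h ∈ H, a = h * b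


section Aux

variable {M : Type*} [CommMonoid M] (H : Submonoid M)

lemma hrel_refl (y : M) : HRel H y y := fun _ => Iff.rfl

lemma hrel_of_eq {y y' : M} (h : y = y') : HRel H y y' := by subst h; exact hrel_refl H y

lemma hrel_symm {y y' : M} (h : HRel H y y') : HRel H y' y := fun x => (h x).symm

lemma hrel_trans {a b c : M} (h1 : HRel H a b) (h2 : HRel H b c) : HRel H a c :=
  fun x => (h1 x).trans (h2 x)

lemma hrel_mul_left (c : M) {y y' : M} (h : HRel H y y') : HRel H (c * y) (c * y') := by
  intro x
  rw [← mul_assoc, ← mul_assoc]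
  exact h (x * c)

lemma hrel_mem {y y' : M} (h : HRel H y y') : y ∈ H ↔ y' ∈ H := by
  have := h 1
  simpa using this

/-- The key abstract lemma: if `t^n ∈ H` for all `n ≥ N` with `N ≥ 1`, then `t ∈ H`. -/
lemma mem_of_pow_mem (hux : UnitsCond H) (hfin : CStarFinite H) (hug : CStarUnionOfGroups H)
    (t : M) (N : ℕ) (hN : 1 ≤ N) (ht : ∀ n ≥ N, t ^ n ∈ H) : t ∈ H := by
  by_cases hu : IsUnit t
  · -- unit case
    obtain ⟨u, rfl⟩ := hu
    have h1 : ((u : M)) ^ N ∈ H := ht N le_rfl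
    have h2 : ((u : M)) ^ (N + 1) ∈ H := ht (N + 1) (by omega)
    have h3 : (((u ^ N)⁻¹ : Mˣ) : M) ∈ H := by
      apply hux
      simpa using h1
    have key : (u : M) = (u : M) ^ (N + 1) * (((u ^ N)⁻¹ : Mˣ) : M) := by
      have huv : (u : M) ^ (N + 1) = ((u ^ (N + 1) : Mˣ) : M) := by simp
      rw [huv, ← Units.val_mul]
      congr 1
      rw [pow_succ]
      group
    rw [key]
    exact H.mul_mem h2 h3
  · -- nonunit case
    have hNU : NU1 t := Or.inl hu
    obtain ⟨e, _, hee, hte, z, _, hz⟩ := hug t hNU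
    -- powers of t are nonunits
    have hpow : ∀ k : ℕ, NU1 (t ^ (k + 1)) := by
      intro k
      left
      intro h
      exact hu ((isUnit_pow_iff (Nat.succ_ne_zero k)).mp h)
    obtain ⟨n, f, hf⟩ := hfin
    -- pigeonhole: two powers are H-equivalent
    have hexists : ∀ k : ℕ, ∃ i : Fin n, HRel H (t ^ (k + 1)) (f i) := fun k => hf _ (hpow k)
    let g : ℕ → Fin n := fun k => (hexists k).choose
    have hg : ∀ k, HRel H (t ^ (k + 1)) (f (g k)) := fun k => (hexists k).choose_spec
    obtain ⟨i, j, hij, hgij⟩ := Finite.exists_ne_map_eq_of_infinite g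
    -- extract k ≥ 1, d ≥ 1 with t^k ~ t^(k+d)
    obtain ⟨k, d, hd, hk1, hkd⟩ : ∃ k d : ℕ, 1 ≤ d ∧ 1 ≤ k ∧ HRel H (t ^ k) (t ^ (k + d)) := by
      rcases Nat.lt_or_ge i j with hlt | hge
      · refine ⟨i + 1, j - i, by omega, by omega, ?_⟩
        have hsum : i + 1 + (j - i) = j + 1 := by omega
        rw [hsum]
        exact hrel_trans H (hg i) (hrel_trans H (hrel_of_eq H (by rw [hgij])) (hrel_symm H (hg j)))
      · have hlt : j < i := by omega
        refine ⟨j + 1, i - j, by omega, by omega, ?_⟩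
        have hsum : j + 1 + (i - j) = i + 1 := by omega
        rw [hsum]
        exact hrel_trans H (hg j) (hrel_trans H (hrel_of_eq H (by rw [hgij])) (hrel_symm H (hg i)))
    -- Claim A : t^(q+1) * e ~ t^(q+1)
    have claimA : ∀ q : ℕ, HRel H (t ^ (q + 1) * e) (t ^ (q + 1)) := by
      intro q
      have h0 := hrel_mul_left H (t ^ q) hte
      refine hrel_trans H (hrel_of_eq H ?_) (hrel_trans H h0 (hrel_of_eq H ?_))
      · rw [pow_succ]
        simp [mul_assoc, mul_comm, mul_left_comm]
      · rw [pow_succ]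
    -- (t*z) * e ~ e
    have hze : HRel H ((t * z) * e) e :=
      hrel_trans H (hrel_of_eq H (mul_comm _ _)) (hrel_trans H (hrel_mul_left H e hz) hee)
    -- Claim B : (t*z)^(q+1) ~ e
    have claimB : ∀ q : ℕ, HRel H ((t * z) ^ (q + 1)) e := by
      intro q
      induction q with
      | zero => simpa using hz
      | succ q ih =>
        have h1 : HRel H ((t * z) ^ (q + 1 + 1)) ((t * z) * e) :=
          hrel_trans H (hrel_of_eq H (pow_succ' _ _)) (hrel_mul_left H (t * z) ih)
        exact hrel_trans H h1 hze
    -- Claim C : t^d * e ~ e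
    have claimC : HRel H (t ^ d * e) e := by
      obtain ⟨k', rfl⟩ : ∃ k', k = k' + 1 := ⟨k - 1, by omega⟩
      have h1 : HRel H (z ^ (k' + 1) * t ^ (k' + 1)) (z ^ (k' + 1) * t ^ (k' + 1 + d)) :=
        hrel_mul_left H _ hkd
      have e1 : z ^ (k' + 1) * t ^ (k' + 1) = (t * z) ^ (k' + 1) := by
        rw [mul_pow]; exact mul_comm _ _
      have e2 : z ^ (k' + 1) * t ^ (k' + 1 + d) = t ^ d * (t * z) ^ (k' + 1) := by
        rw [pow_add t (k' + 1) d, ← mul_assoc, e1, mul_comm]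
      -- (t*z)^(k'+1) ~ t^d * (t*z)^(k'+1)
      have h2 : HRel H ((t * z) ^ (k' + 1)) (t ^ d * (t * z) ^ (k' + 1)) :=
        hrel_trans H (hrel_of_eq H e1.symm) (hrel_trans H h1 (hrel_of_eq H e2))
      have h3 : HRel H (t ^ d * (t * z) ^ (k' + 1)) (t ^ d * e) :=
        hrel_mul_left H _ (claimB k')
      exact hrel_trans H (hrel_symm H h3) (hrel_trans H (hrel_symm H h2) (claimB k'))
    -- Claim D : t^(d*(s+1)) * e ~ e
    have claimD : ∀ s : ℕ, HRel H (t ^ (d * (s + 1)) * e) e := by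
      intro s
      induction s with
      | zero => simpa using claimC
      | succ s ih =>
        have e3 : t ^ (d * (s + 1 + 1)) * e = t ^ d * (t ^ (d * (s + 1)) * e) := by
          rw [← mul_assoc, ← pow_add]
          ring_nf
        have h1 : HRel H (t ^ d * (t ^ (d * (s + 1)) * e)) (t ^ d * e) := hrel_mul_left H _ ih
        exact hrel_trans H (hrel_of_eq H e3) (hrel_trans H h1 claimC)
    -- put it together with K := d * N
    obtain ⟨N', rfl⟩ : ∃ N', N = N' + 1 := ⟨N - 1, by omega⟩
    set K := d * (N' + 1) with hK
    have hKN : N' + 1 ≤ K := by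
      calc N' + 1 = 1 * (N' + 1) := (one_mul _).symm
        _ ≤ d * (N' + 1) := Nat.mul_le_mul_right _ hd
    have hDK : HRel H (t ^ K * e) e := claimD N'
    have h1 : HRel H (t ^ (K + 1) * e) (t * e) := by
      have e4 : t ^ (K + 1) * e = t * (t ^ K * e) := by
        rw [pow_succ, ← mul_assoc, mul_comm (t ^ K) t]
      exact hrel_trans H (hrel_of_eq H e4) (hrel_mul_left H t hDK)
    have h2 : HRel H (t ^ (K + 1) * e) t := hrel_trans H h1 hte
    have h3 : HRel H (t ^ (K + 1) * e) (t ^ (K + 1)) := claimA K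
    have h4 : t ^ (K + 1) ∈ H := ht (K + 1) (by omega)
    exact (hrel_mem H h2).mp ((hrel_mem H h3).mpr h4)

end Aux

/-- If `H` is a C-monoid in the factorial monoid `F` (i.e. `H^× = H ∩ F^×` and
`C*(H,F)` is finite) and the reduced class semigroup `C*(H,F)` is a union of
groups, then `H` is seminormal. -/
theorem stmt_9 {Fu P : Type*} [CommGroup Fu] (H : Submonoid (FM Fu P))
    (hux : UnitsCond H) (hfin : CStarFinite H) (hug : CStarUnionOfGroups H) :
    SeminormalSub H := by
  rintro a b ha hb ⟨m, hm⟩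
  set N := max m 1 with hN
  have hN1 : 1 ≤ N := le_max_right _ _
  obtain ⟨h0, h0H, hab⟩ := hm N (le_max_left _ _)
  -- second components: b.2 ≤ a.2 pointwise
  have h2 : (N : ℕ) • a.2.toAdd = h0.2.toAdd + N • b.2.toAdd := by
    have := congrArg (fun x : FM Fu P => Multiplicative.toAdd x.2) hab
    simpa [toAdd_pow] using this
  have hle : b.2.toAdd ≤ a.2.toAdd := by
    refine Finsupp.le_def.mpr fun p => ?_
    have hp := congrArg (fun f : P →₀ ℕ => f p) h2
    simp only [Finsupp.smul_apply, Finsupp.add_apply, smul_eq_mul] at hp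
    refine Nat.le_of_mul_le_mul_left ?_ (show 0 < N by omega)
    omega
  -- the quotient t with t * b = a
  set t : FM Fu P := (a.1 * b.1⁻¹, Multiplicative.ofAdd (a.2.toAdd - b.2.toAdd)) with hT
  have htb : t * b = a := by
    ext : 1
    · show a.1 * b.1⁻¹ * b.1 = a.1
      simp
    · show Multiplicative.toAdd (t.2 * b.2) = a.2.toAdd
      rw [toAdd_mul]
      show a.2.toAdd - b.2.toAdd + b.2.toAdd = a.2.toAdd
      exact tsub_add_cancel_of_le hle
  -- t^n ∈ H for all n ≥ N
  have htpow : ∀ n ≥ N, t ^ n ∈ H := by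
    intro n hn
    obtain ⟨h1, h1H, hab1⟩ := hm n (le_trans (le_max_left _ _) hn)
    have : t ^ n * b ^ n = h1 * b ^ n := by
      rw [← mul_pow, htb, hab1]
    have := mul_right_cancel this
    rwa [this]
  have : t ∈ H := mem_of_pow_mem H hux hfin hug t N hN1 htpow
  exact ⟨t, this, htb.symm⟩
end

section
/- Let H ⊆ F be a C-monoid such that the reduced class semigroup C*(H,F) is a union of groups. Then for every nonunit a ∈ H \ H^×, the class [a] in the class semigroup is idempotent, i.e., a is H-equivalent to a². -/
/-!
The powers `[a]^(k+1)` of a nonunit `a` are classes of nonunits, so finiteness of `C*(H,F)`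
gives `[a]^(i+1) = [a]^(j+1)` for some `i < j`. As `[a]` lies in a group with identity `[e]`
and `[a][z] = [e]`, multiplying by `[z]^i` cancels `[a]^i` and leaves `[a] = [a]^(d+1)` with
`d = j - i ≥ 1`. Finally `a ∈ H` upgrades `a ~ a^(d+1)` to `a ~ a²`: if `x a² ∈ H`, then
`x a^(d+1) = x a² a^(d-1) ∈ H`.
-/

theorem pow_sub_add_one_eq_self_of_pow_succ_eq {Q : Type*} [CommMonoid Q] {α ε ζ : Q}
    (hε : α * ε = α) (hζ : α * ζ = ε) {i j : ℕ} (hij : i < j) (h : α ^ (i + 1) = α ^ (j + 1)) :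
    α ^ (j - i + 1) = α := by
  have hεpow : ∀ k : ℕ, α * ε ^ k = α := fun k => by
    induction k with
    | zero => rw [pow_zero, mul_one]
    | succ k ih => rw [pow_succ, ← mul_assoc, ih, hε]
  have hcancel : α ^ (i + 1) * ζ ^ i = α := by
    rw [pow_succ', mul_assoc, ← mul_pow, hζ, hεpow]
  calc α ^ (j - i + 1) = α ^ (j - i) * (α ^ (i + 1) * ζ ^ i) := by rw [hcancel, pow_succ]
    _ = α ^ (j + 1) * ζ ^ i := by
      rw [← mul_assoc, ← pow_add, show j - i + (i + 1) = j + 1 by omega]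
    _ = α := by rw [← h, hcancel]

section ClassSemigroup

variable {M : Type*} [CommMonoid M]

/-- The quotient by this congruence is the class semigroup `C(H,F)`. -/
def hrelCon (H : Submonoid M) : Con M where
  r := HRel H
  iseqv := ⟨fun _ _ => Iff.rfl, fun h x => (h x).symm, fun h h' x => (h x).trans (h' x)⟩
  mul' {a b c d} hab hcd x := by
    calc x * (a * c) ∈ H ↔ x * c * a ∈ H := by rw [mul_comm a, mul_assoc]
      _ ↔ x * c * b ∈ H := hab _
      _ ↔ x * b * c ∈ H := by rw [mul_right_comm]
      _ ↔ x * b * d ∈ H := hcd _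
      _ ↔ x * (b * d) ∈ H := by rw [mul_assoc]

variable {H : Submonoid M}

theorem CStarFinite.exists_lt_pow_succ_eq (hfin : CStarFinite H) {a : M} (ha : ¬IsUnit a) :
    ∃ i j : ℕ, i < j ∧
      (a : (hrelCon H).Quotient) ^ (i + 1) = (a : (hrelCon H).Quotient) ^ (j + 1) := by
  obtain ⟨n, f, hf⟩ := hfin
  refine (Set.finite_range fun i => (f i : (hrelCon H).Quotient)).exists_lt_map_eq_of_forall_mem
    (f := fun k : ℕ => (a : (hrelCon H).Quotient) ^ (k + 1)) fun k => ?_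
  obtain ⟨i, hi⟩ := hf _ (Or.inl fun hu => ha ((isUnit_pow_iff k.succ_ne_zero).mp hu))
  exact ⟨i, (Con.eq _).2 ((hrelCon H).symm hi)⟩

theorem hrel_mul_self_of_hrel_pow {a : M} (ha : a ∈ H) {n : ℕ} (h : HRel H a (a ^ (n + 2))) :
    HRel H (a * a) a := fun x => by
  refine ⟨fun hx => (h x).2 ?_, fun hx => mul_assoc x a a ▸ mul_mem hx ha⟩
  rw [pow_add, pow_two, mul_left_comm]
  exact mul_mem (pow_mem ha n) hx

end ClassSemigroup

theorem stmt_10_general {Fu P : Type*} [CommGroup Fu] (H : Submonoid (FM Fu P))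
    (hfin : CStarFinite H) (hug : CStarUnionOfGroups H) :
    ∀ a : FM Fu P, a ∈ H → ¬ IsUnit a → HRel H (a * a) a := by
  intro a ha hna
  obtain ⟨e, -, -, hae, z, -, haz⟩ := hug a (Or.inl hna)
  obtain ⟨i, j, hij, hpow⟩ := hfin.exists_lt_pow_succ_eq hna
  have hperiod : (a : (hrelCon H).Quotient) ^ (j - i + 1) = a :=
    pow_sub_add_one_eq_self_of_pow_succ_eq (by rw [← Con.coe_mul, Con.eq]; exact hae)
      (by rw [← Con.coe_mul, Con.eq]; exact haz) hij hpow
  refine hrel_mul_self_of_hrel_pow ha (n := j - i - 1) ?_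
  rw [show j - i - 1 + 2 = j - i + 1 by omega]
  -- Powers in `Con.Quotient` are induced from `M`, so `Con.eq` applies to `hperiod` as is.
  exact (hrelCon H).symm ((Con.eq _).1 hperiod)

/-- Let `H ⊆ F` be a C-monoid whose reduced class semigroup `C*(H,F)` is a
union of groups.  Then for every nonunit `a ∈ H \ H^×`, the class `[a]` is
idempotent, i.e. `a` is `H`-equivalent to `a²`. -/
theorem stmt_10 {Fu P : Type*} [CommGroup Fu] (H : Submonoid (FM Fu P))
    (hux : UnitsCond H) (hfin : CStarFinite H) (hug : CStarUnionOfGroups H) :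
    ∀ a : FM Fu P, a ∈ H → ¬ IsUnit a → HRel H (a * a) a :=
  stmt_10_general H hfin hug
end

section
/- Let H ⊆ F be a seminormal C-monoid such that there exist α ∈ ℕ and a subgroup V ⊆ F^× with H^× ⊆ V, (F^× : V) dividing α, V·(H\H^×) ⊆ H, and q^{2α}F ∩ H = q^α(q^α F ∩ H) for all q ∈ F \ F^×. Then for every a ∈ F \ F^× and every n that is a multiple of α with [a^n] idempotent in C*(H,F), the element a^{n+1} is H-equivalent to a; in particular every class [a] lies in a cyclic subgroup of C*(H,F). -/
section

variable {M : Type*} [CommMonoid M] [IsLeftCancelMul M] {H : Submonoid M}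

theorem shift_mem_iff_of_image_eq {t : M}
    (ht : {a : M | ∃ x : M, a = t ^ 2 * x} ∩ ↑H =
      (fun a : M => t * a) '' ({a : M | ∃ x : M, a = t * x} ∩ ↑H)) (y : M) :
    t * y ∈ H ↔ t * (t * y) ∈ H := by
  constructor
  · intro hy
    have hmem : t * (t * y) ∈ (fun a : M => t * a) '' ({a : M | ∃ x : M, a = t * x} ∩ ↑H) :=
      ⟨t * y, ⟨⟨y, rfl⟩, hy⟩, rfl⟩
    exact (ht ▸ hmem).2
  · intro hy
    have hsq : t * (t * y) = t ^ 2 * y := by rw [sq, mul_assoc]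
    have hmem : t * (t * y) ∈ {a : M | ∃ x : M, a = t ^ 2 * x} ∩ ↑H := ⟨⟨y, hsq⟩, hy⟩
    obtain ⟨c, ⟨-, hc⟩, hct⟩ := ht ▸ hmem
    rwa [mul_left_cancel hct] at hc

namespace SeminormalSub

theorem mem_of_forall_pow_mem (hsn : SeminormalSub H) {w : M} {N : ℕ}
    (hw : ∀ n ≥ N, w ^ n ∈ H) : w ∈ H := by
  obtain ⟨h, hh, hwh⟩ := hsn (w ^ (N + 1)) (w ^ N) (hw _ N.le_succ) (hw _ le_rfl)
    ⟨N, fun n hn => ⟨w ^ n, hw n hn, by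
      rw [← pow_mul, ← pow_mul, ← pow_add]; congr 1; ring⟩⟩
  have : w ^ N * w = w ^ N * h := by rw [← pow_succ, hwh, mul_comm]
  exact mul_left_cancel this ▸ hh

variable {s w : M} {m : ℕ}

theorem mem_of_mul_mem (hsn : SeminormalSub H) (hs : ∀ y, s * (s * y) ∈ H → s * y ∈ H)
    (hw : s ∣ w ^ m) (hws : w * s ∈ H) : w ∈ H := by
  have hpow : ∀ n, w ^ (n + 1) * s ∈ H := by
    intro n
    induction n with
    | zero => simpa using hws
    | succ n ih =>
      have hsq : s * (s * w ^ (n + 2)) = w ^ (n + 1) * s * (w * s) := by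
        rw [pow_succ w (n + 1)]; ac_rfl
      rw [mul_comm]
      exact hs _ (hsq ▸ H.mul_mem ih hws)
  refine hsn.mem_of_forall_pow_mem (N := m + 1) fun n hn => ?_
  obtain ⟨k, rfl⟩ : ∃ k, n = k + 1 := ⟨n - 1, by omega⟩
  obtain ⟨c, hc⟩ := hw.trans (pow_dvd_pow w (by omega : m ≤ k + 1))
  rw [hc]
  exact hs c (by rw [← hc, mul_comm]; exact hpow k)

theorem mul_mem_of_mem (hsn : SeminormalSub H) (hs : ∀ y, s * y ∈ H → s * (s * y) ∈ H)
    (hw : s ∣ w ^ m) (hwH : w ∈ H) : w * s ∈ H := by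
  obtain ⟨c, hc⟩ := hw
  have hpow : ∀ k, w ^ m * s ^ k ∈ H := by
    intro k
    induction k with
    | zero => simpa using H.pow_mem hwH m
    | succ k ih =>
      have hsq : w ^ m * s ^ (k + 1) = s * (s * (c * s ^ k)) := by
        rw [hc, pow_succ']; ac_rfl
      exact hsq ▸ hs (c * s ^ k) (by rwa [← mul_assoc, ← hc])
  refine hsn.mem_of_forall_pow_mem (N := m) fun n hn => ?_
  obtain ⟨j, rfl⟩ := Nat.exists_eq_add_of_le hn
  have : (w * s) ^ (m + j) = w ^ j * (w ^ m * s ^ (m + j)) := by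
    rw [mul_pow, pow_add w]; ac_rfl
  exact this ▸ H.mul_mem (H.pow_mem hwH j) (hpow _)

theorem mul_pow_mem_iff (hsn : SeminormalSub H) (hs : ∀ y, s * y ∈ H ↔ s * (s * y) ∈ H)
    (hw : s ∣ w ^ m) (k : ℕ) : w * s ^ k ∈ H ↔ w ∈ H := by
  induction k with
  | zero => simp
  | succ k ih =>
    have hwk : s ∣ (w * s ^ k) ^ m := hw.trans (pow_dvd_pow_of_dvd (dvd_mul_right w _) m)
    rw [pow_succ, ← mul_assoc, ← ih]
    exact ⟨hsn.mem_of_mul_mem (fun y => (hs y).2) hwk,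
      hsn.mul_mem_of_mem (fun y => (hs y).1) hwk⟩

end SeminormalSub

end

theorem stmt_11_general {Fu P : Type*} [CommGroup Fu] (H : Submonoid (FM Fu P))
    (hsn : SeminormalSub H)
    (α : ℕ)
    (hP2 : ∀ q : FM Fu P, ¬ IsUnit q →
      {a : FM Fu P | ∃ x : FM Fu P, a = q ^ (2 * α) * x} ∩ ↑H =
        (fun a : FM Fu P => q ^ α * a) ''
          ({a : FM Fu P | ∃ x : FM Fu P, a = q ^ α * x} ∩ ↑H)) :
    ∀ a : FM Fu P, ¬ IsUnit a → ∀ n : ℕ, 0 < n → α ∣ n →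
      HRel H (a ^ n * a ^ n) (a ^ n) →
      HRel H (a ^ (n + 1)) a ∧ ∃ m : ℕ, 0 < m ∧ HRel H (a ^ (m + 1)) a := by
  intro a ha n hn ⟨k, hk⟩ _
  have hshift := shift_mem_iff_of_image_eq (t := a ^ α) (by rw [← pow_mul', hP2 a ha])
  have key : HRel H (a ^ (n + 1)) a := fun x => by
    rw [show x * a ^ (n + 1) = x * a * (a ^ α) ^ k by
      rw [hk, pow_succ, pow_mul, ← mul_assoc, mul_right_comm]]
    exact hsn.mul_pow_mem_iff hshift (m := α) (by rw [mul_pow]; exact dvd_mul_left _ _) k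
  exact ⟨key, n, hn, key⟩

/-- Let `H ⊆ F` be a seminormal C-monoid and suppose there are `α ∈ ℕ` and a
subgroup `V ⊆ F^×` with `H^× ⊆ V`, `(F^× : V) ∣ α`, `V·(H \ H^×) ⊆ H`, and
`q^{2α}F ∩ H = q^α(q^αF ∩ H)` for all `q ∈ F \ F^×`.  Then for every
`a ∈ F \ F^×` and every positive multiple `n` of `α` such that `[a^n]` is
idempotent in `C*(H,F)`, the element `a^{n+1}` is `H`-equivalent to `a`; in
particular `[a]` lies in a cyclic subgroup of `C*(H,F)`. -/
theorem stmt_11 {Fu P : Type*} [CommGroup Fu] (H : Submonoid (FM Fu P))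
    (hux : UnitsCond H) (hfin : CStarFinite H) (hsn : SeminormalSub H)
    (α : ℕ) (hα : 0 < α) (V : Subgroup (FM Fu P)ˣ)
    (hHV : ∀ u : (FM Fu P)ˣ, (u : FM Fu P) ∈ H → u ∈ V)
    (hidx : V.index ∣ α)
    (hVH : ∀ u ∈ V, ∀ a : FM Fu P, a ∈ H → ¬ IsUnit a → (u : FM Fu P) * a ∈ H)
    (hP2 : ∀ q : FM Fu P, ¬ IsUnit q →
      {a : FM Fu P | ∃ x : FM Fu P, a = q ^ (2 * α) * x} ∩ ↑H =
        (fun a : FM Fu P => q ^ α * a) ''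
          ({a : FM Fu P | ∃ x : FM Fu P, a = q ^ α * x} ∩ ↑H)) :
    ∀ a : FM Fu P, ¬ IsUnit a → ∀ n : ℕ, 0 < n → α ∣ n →
      HRel H (a ^ n * a ^ n) (a ^ n) →
      HRel H (a ^ (n + 1)) a ∧ ∃ m : ℕ, 0 < m ∧ HRel H (a ^ (m + 1)) a :=
  stmt_11_general H hsn α hP2
end

section
/- Let H ⊆ F be a C-monoid. Either the set {[y] : y ∈ F^×} of classes of units is contained in the reduced class semigroup C*(H,F), or their intersection equals {[1]}. Consequently, the class semigroup C(H,F) is a union of groups if and only if C*(H,F) is a union of groups. -/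
/-- The full class semigroup `C(H,F)` is a union of groups: every class `[y]`
(`y ∈ F`) lies in the constituent group of some idempotent class. -/
def CUnionOfGroups {M : Type*} [CommMonoid M] (H : Submonoid M) : Prop :=
  ∀ y : M, ∃ e : M, HRel H (e * e) e ∧ HRel H (y * e) y ∧
    ∃ z : M, HRel H (y * z) e

/-!
`H`-equivalence is a congruence, so multiplying a relation `u₀ ~ y₀` (unit `u₀`, non-unit
`y₀`) by `u * u₀⁻¹` moves every unit class onto a non-unit; otherwise a unit is equivalent
only to units, hence to a reduced representative only if that representative is `1`.
Unit classes always lie in the group of `[1]`. For a non-unit `y` in the group of `[e]`, an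
idempotent unit class `[e]` equals `[1]`, and the inverse `[z]` of `[y]` may be replaced by
`[y z z]`, which has a non-unit representative.
-/

namespace HRel

variable {M : Type*} [CommMonoid M] {H : Submonoid M}

theorem of_eq {a b : M} (h : a = b) : HRel H a b := fun _ => h ▸ Iff.rfl

theorem trans {a b c : M} (h₁ : HRel H a b) (h₂ : HRel H b c) : HRel H a c :=
  fun x => (h₁ x).trans (h₂ x)

theorem mul_left (c : M) {a b : M} (h : HRel H a b) : HRel H (c * a) (c * b) := by
  intro x
  simpa only [mul_assoc] using h (x * c)

theorem mul_right (c : M) {a b : M} (h : HRel H a b) : HRel H (a * c) (b * c) := by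
  simpa only [mul_comm _ c] using h.mul_left c

theorem mul {a b c d : M} (hab : HRel H a b) (hcd : HRel H c d) : HRel H (a * c) (b * d) :=
  (hab.mul_right c).trans (hcd.mul_left b)

theorem one_of_idempotent_of_isUnit {e : M} (he : IsUnit e) (hee : HRel H (e * e) e) :
    HRel H e 1 := by
  obtain ⟨w, rfl⟩ := he
  simpa only [Units.inv_mul_cancel_left, Units.inv_mul] using hee.mul_left (↑w⁻¹ : M)

end HRel

section ClassSemigroup

variable {M : Type*} [CommMonoid M] (H : Submonoid M)

theorem unit_classes_subset_or_inter_eq_one :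
    (∀ u : M, IsUnit u → ∃ y : M, NU1 y ∧ HRel H u y) ∨
      (∀ u y : M, IsUnit u → NU1 y → HRel H u y → HRel H u 1) := by
  by_cases hex : ∃ u₀ y₀ : M, IsUnit u₀ ∧ ¬ IsUnit y₀ ∧ HRel H u₀ y₀
  · obtain ⟨u₀, y₀, ⟨w, rfl⟩, hy₀, hrel⟩ := hex
    refine Or.inl fun u _ =>
      ⟨u * ↑w⁻¹ * y₀, Or.inl fun h => hy₀ (isUnit_of_mul_isUnit_right h), ?_⟩
    simpa only [Units.inv_mul_cancel_right] using hrel.mul_left (u * ↑w⁻¹)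
  · refine Or.inr fun u y hu hy hrel => ?_
    rcases hy with hy | rfl
    · exact absurd ⟨u, y, hu, hy, hrel⟩ hex
    · exact hrel

theorem cStarUnionOfGroups_of_cUnionOfGroups (hC : CUnionOfGroups H) :
    CStarUnionOfGroups H := by
  intro y hy
  rcases hy with hy | rfl
  · obtain ⟨e, hee, hye, z, hyz⟩ := hC y
    have hz : NU1 (y * z * z) :=
      Or.inl fun h => hy (isUnit_of_mul_isUnit_left (isUnit_of_mul_isUnit_left h))
    have hyyzz : HRel H (y * (y * z * z)) e :=
      ((HRel.of_eq (by ac_rfl : y * (y * z * z) = y * z * (y * z))).trans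
        (hyz.mul hyz)).trans hee
    by_cases heu : IsUnit e
    · have he1 := HRel.one_of_idempotent_of_isUnit heu hee
      exact ⟨1, Or.inr rfl, HRel.of_eq (mul_one 1), HRel.of_eq (mul_one y), y * z * z, hz,
        hyyzz.trans he1⟩
    · exact ⟨e, Or.inl heu, hee, hye, y * z * z, hz, hyyzz⟩
  · exact ⟨1, Or.inr rfl, HRel.of_eq (mul_one 1), HRel.of_eq (mul_one 1), 1, Or.inr rfl,
      HRel.of_eq (mul_one 1)⟩

theorem cUnionOfGroups_of_cStarUnionOfGroups (hC : CStarUnionOfGroups H) :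
    CUnionOfGroups H := by
  intro y
  by_cases hu : IsUnit y
  · obtain ⟨w, rfl⟩ := hu
    exact ⟨1, HRel.of_eq (mul_one 1), HRel.of_eq (mul_one _), ↑w⁻¹, HRel.of_eq w.mul_inv⟩
  · obtain ⟨e, -, hee, hye, z, -, hyz⟩ := hC y (Or.inl hu)
    exact ⟨e, hee, hye, z, hyz⟩

end ClassSemigroup

theorem stmt_13_general {Fu P : Type*} [CommGroup Fu] (H : Submonoid (FM Fu P)) :
    ((∀ u : FM Fu P, IsUnit u → ∃ y : FM Fu P, NU1 y ∧ HRel H u y) ∨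
      (∀ u y : FM Fu P, IsUnit u → NU1 y → HRel H u y → HRel H u 1)) ∧
    (CUnionOfGroups H ↔ CStarUnionOfGroups H) :=
  ⟨unit_classes_subset_or_inter_eq_one H,
    cStarUnionOfGroups_of_cUnionOfGroups H, cUnionOfGroups_of_cStarUnionOfGroups H⟩

/-- For a C-monoid `H ⊆ F`: either every class of a unit of `F` equals the
class of some element of `(F \ F^×) ∪ {1}` (i.e. `{[y] : y ∈ F^×} ⊆ C*(H,F)`),
or the only unit classes lying in `C*(H,F)` are equal to `[1]`.
Consequently, `C(H,F)` is a union of groups iff `C*(H,F)` is. -/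
theorem stmt_13 {Fu P : Type*} [CommGroup Fu] (H : Submonoid (FM Fu P))
    (hux : UnitsCond H) (hfin : CStarFinite H) :
    ((∀ u : FM Fu P, IsUnit u → ∃ y : FM Fu P, NU1 y ∧ HRel H u y) ∨
      (∀ u y : FM Fu P, IsUnit u → NU1 y → HRel H u y → HRel H u 1)) ∧
    (CUnionOfGroups H ↔ CStarUnionOfGroups H) :=
  stmt_13_general H
end

section
/- Let F = ℱ({p₁, p₂}) be the free abelian monoid on two elements and let H be the submonoid generated by {p₁p₂} ∪ {p₁^{2k}p₂ : k ≥ 0}, i.e., H = {1, p₁p₂} ∪ {p₁^{2k}p₂ : k ≥ 0} ∪ {p₁^t p₂^s : t ≥ 0, s ≥ 2}. Then p₁² is H-equivalent to p₁⁴ in F (so [p₁²] is idempotent in the class semigroup), yet p₁² ∉ H. -/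
/-- The free abelian monoid on two elements `p₁, p₂`, written additively as
`ℕ × ℕ` (so `p₁ = (1,0)`, `p₂ = (0,1)` and `p₁^t p₂^s = (t,s)`), and the
submonoid `H` generated by `p₁p₂ = (1,1)` and `p₁^{2k}p₂ = (2k,1)`, `k ≥ 0`. -/
def Hex : AddSubmonoid (ℕ × ℕ) :=
  AddSubmonoid.closure ({(1, 1)} ∪ {x : ℕ × ℕ | ∃ k : ℕ, x = (2 * k, 1)})

lemma mem_Hex_iff (z : ℕ × ℕ) :
    z ∈ Hex ↔ z = (0, 0) ∨ (z.2 = 1 ∧ (z.1 = 1 ∨ Even z.1)) ∨ 2 ≤ z.2 := by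
  constructor
  · intro h
    induction h using AddSubmonoid.closure_induction with
    | mem x hx =>
      rcases hx with hx | ⟨k, rfl⟩
      · simp_all
      · simp
    | zero => simp [Prod.ext_iff]
    | add a b _ _ ha hb =>
      rcases ha with rfl | ⟨h1, h2⟩ | h
      · simpa [Prod.ext_iff] using hb
      · rcases hb with rfl | ⟨h1', h2'⟩ | h'
        · simp [h1, h2]
        · right; right; simp [Prod.snd_add]; omega
        · right; right; simp [Prod.snd_add]; omega
      · right; right; simp [Prod.snd_add]; omega
  · intro h
    have hgen : ∀ k : ℕ, ((2 * k, 1) : ℕ × ℕ) ∈ Hex := fun k =>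
      AddSubmonoid.subset_closure (Or.inr ⟨k, rfl⟩)
    have h11 : ((1, 1) : ℕ × ℕ) ∈ Hex := AddSubmonoid.subset_closure (Or.inl rfl)
    have h01 : ((0, 1) : ℕ × ℕ) ∈ Hex := by simpa using hgen 0
    rcases h with rfl | ⟨h1, h2⟩ | h
    · exact zero_mem _
    · obtain ⟨t, s⟩ := z
      simp at h1 h2; subst h1
      rcases h2 with h2 | ⟨k, hk⟩
      · subst h2; exact h11
      · have : t = 2 * k := by omega
        subst this; exact hgen k
    · obtain ⟨t, s⟩ := z
      simp at h
      have ht2 : ((t, 2) : ℕ × ℕ) ∈ Hex := by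
        rcases Nat.even_or_odd t with ⟨k, hk⟩ | ⟨k, hk⟩
        · have heq : ((t, 2) : ℕ × ℕ) = (2 * k, 1) + (0, 1) := by
            simp [Prod.ext_iff]; omega
          rw [heq]; exact AddSubmonoid.add_mem _ (hgen k) h01
        · have heq : ((t, 2) : ℕ × ℕ) = (2 * k, 1) + (1, 1) := by
            simp [Prod.ext_iff]; omega
          rw [heq]; exact AddSubmonoid.add_mem _ (hgen k) h11
      have heq : ((t, s) : ℕ × ℕ) = (t, 2) + (s - 2) • (0, 1) := by
        simp [Prod.ext_iff]; omega
      rw [heq]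
      exact AddSubmonoid.add_mem _ ht2 (AddSubmonoid.nsmul_mem _ h01 _)

/-- In the example above, `p₁² = (2,0)` is `H`-equivalent to `p₁⁴ = (4,0)`
(so the class `[p₁²]` is idempotent in the class semigroup), yet `p₁² ∉ H`. -/
theorem stmt_15 :
    (∀ x : ℕ × ℕ, x + (2, 0) ∈ Hex ↔ x + (4, 0) ∈ Hex) ∧ (2, 0) ∉ Hex := by
  constructor
  · rintro ⟨a, b⟩
    rw [mem_Hex_iff, mem_Hex_iff]
    simp [Prod.ext_iff, Nat.even_iff]
    omega
  · rw [mem_Hex_iff]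
    simp
end

section
/- Let H ⊆ F be a dense seminormal C-monoid such that every class of C*(H,F) contains an element of P, with idempotents e₀ = [1], ..., e_n of C*(H,F) satisfying e₀+...+e_n = e_n. If H is half-factorial, then the quotient group C_n*/φ_n(C_{F^×}(H,F)) has at most 2 elements, where C_n* is the constituent group of e_n and φ_n([ε]) = [ε] + e_n for ε ∈ F^×. -/
/-- The prime element of `F = F^× × ℱ(P)` corresponding to `p ∈ P`. -/
noncomputable def primeElt {Fu P : Type*} [CommGroup Fu] (p : P) : FM Fu P :=
  (1, Multiplicative.ofAdd (Finsupp.single p 1))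

/-- `H` is dense in `F`: for every prime `p`, the set `v_p(H) ⊆ ℕ₀` is a
numerical monoid, i.e. has finite complement in `ℕ₀`. -/
def DenseSub {Fu P : Type*} [CommGroup Fu] (H : Submonoid (FM Fu P)) : Prop :=
  ∀ p : P, {k : ℕ | ∀ a ∈ H, Multiplicative.toAdd a.2 p ≠ k}.Finite

/-- `a` is an atom (irreducible element) of `H`. -/
def AtomOf {M : Type*} [CommMonoid M] (H : Submonoid M) (a : M) : Prop :=
  a ∈ H ∧ ¬ IsUnit a ∧
    ∀ v w : M, v ∈ H → w ∈ H → a = v * w → IsUnit v ∨ IsUnit w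

/-- `H` is half-factorial: it is atomic and any two factorizations of an
element of `H` into atoms have the same length. -/
def HalfFactorialSub {M : Type*} [CommMonoid M] (H : Submonoid M) : Prop :=
  (∀ a ∈ H, ¬ IsUnit a → ∃ l : List M, (∀ x ∈ l, AtomOf H x) ∧ a = l.prod) ∧
    ∀ l l' : List M, (∀ x ∈ l, AtomOf H x) → (∀ x ∈ l', AtomOf H x) →
      l.prod = l'.prod → l.length = l'.length

/-!
Work in the class monoid `F/~` of `H`-equivalence classes, with idempotent `e = [b]`. Some power
of every class is idempotent (finiteness), so minimality of `e` forces `g^N = e` for each `g`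
absorbing `e`. Hence an element of `H` whose class absorbs `e` has class `e`, and, since `H` is
dense and `e` contains a prime, the whole class `e` lies in `H`. For primes whose classes lie in
the constituent group `Cₑ`, a product `ε p₁ ⋯ pₖ` therefore lies in `H` exactly when the images
of the `pᵢ` in `G = Cₑ / φ(C_{F^×})` multiply to `1`: factorizations in `H` behave like zero-sum
sequences over `G`. If `|G| ≥ 3`, then `G` contains an element `g` of order `d ≥ 3` or a Klein
four-group `{1, g₁, g₂, g₁g₂}`. Choosing primes in the relevant classes gives
`(ε⁻¹pᵈ)(εqᵈ) = (pq)ᵈ` with `[q] = g⁻¹`, or `∏ᵢ εᵢpᵢ² = (ε₁ε₂ε₃·p₁p₂p₃)(p₁p₂p₃)` with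
`g₁g₂g₃ = 1`. The factors are atoms by minimality of the orders, so the factorization lengths
`2 ≠ d` and `3 ≠ 2` contradict half-factoriality.
-/

section ClassMonoid

variable {M : Type*} [CommMonoid M] (H : Submonoid M)

def classCon : Con M where
  r := HRel H
  iseqv := ⟨fun _ _ => Iff.rfl, fun h x => (h x).symm, fun h₁ h₂ x => (h₁ x).trans (h₂ x)⟩
  mul' {y₁ y₂ z₁ z₂} hy hz x := by
    have h₁ := hy (x * z₁)
    rw [mul_right_comm x z₁ y₁, mul_right_comm x z₁ y₂] at h₁
    simpa only [mul_assoc] using h₁.trans (hz (x * y₂))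

def cls : M →* (classCon H).Quotient := (classCon H).mk'

variable {H}

theorem cls_eq_cls {x y : M} : cls H x = cls H y ↔ HRel H x y := Con.eq _

theorem mem_iff_of_cls_eq {x y : M} (h : cls H x = cls H y) : x ∈ H ↔ y ∈ H := by
  simpa using cls_eq_cls.1 h 1

end ClassMonoid

section MonoidFacts

variable {N : Type*}

theorem NU1.mul [CommMonoid N] {a c : N} (ha : NU1 a) (hc : NU1 c) : NU1 (a * c) := by
  rcases ha with ha | rfl
  · rcases hc with hc | rfl
    · exact Or.inl fun h => ha (isUnit_of_mul_isUnit_left h)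
    · rw [mul_one]; exact Or.inl ha
  · simpa using hc

theorem NU1.pow [CommMonoid N] {a : N} (ha : NU1 a) (n : ℕ) : NU1 (a ^ n) := by
  induction n with
  | zero => exact Or.inr (pow_zero a)
  | succ n ih => simpa only [pow_succ] using ih.mul ha

theorem isIdempotentElem_pow_of_pow_add_eq [Monoid N] {x : N} {m k : ℕ} (hk : 0 < k)
    (h : x ^ (m + k) = x ^ m) : IsIdempotentElem (x ^ (m * k)) := by
  have step : ∀ j, m ≤ j → x ^ (j + k) = x ^ j := fun j hj => by
    obtain ⟨i, rfl⟩ := Nat.exists_eq_add_of_le hj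
    rw [add_right_comm, pow_add, h, ← pow_add]
  have periodic : ∀ t j, m ≤ j → x ^ (j + t * k) = x ^ j := by
    intro t
    induction t with
    | zero => simp
    | succ t ih =>
      intro j hj
      rw [add_mul, one_mul, ← add_assoc, step _ (by omega), ih j hj]
  rw [IsIdempotentElem, ← pow_add]
  exact periodic m _ (Nat.le_mul_of_pos_right m hk)

theorem pow_mul_eq_self_of_mul_eq_self [Monoid N] {g e : N} (h : g * e = g) {n : ℕ} (hn : n ≠ 0) :
    g ^ n * e = g ^ n := by
  obtain ⟨n, rfl⟩ := Nat.exists_eq_succ_of_ne_zero hn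
  rw [pow_succ, mul_assoc, h]

section CommMonoid

variable [CommMonoid N] {g g' h e u v : N}

theorem pow_eq_mul_of_mul_eq (he : IsIdempotentElem e) (hg : g * e = g) (hgg' : g * g' = e)
    (hvu : v * u = 1) {i : ℕ} (hi : i ≠ 0) (h : g' ^ i = u * e) : g ^ i = v * e := by
  have hu : u * g ^ i = e :=
    calc u * g ^ i = g ^ i * (u * e) := by rw [mul_left_comm, pow_mul_eq_self_of_mul_eq_self hg hi]
      _ = e := by rw [← h, ← mul_pow, hgg', he.pow_eq hi]
  rw [← hu, ← mul_assoc, hvu, one_mul]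

theorem eq_mul_of_mul_eq_mul (hg : g * e = g) (hh : h * e = h) (hhg' : h * g' = e)
    (h' : g * g' = u * e) : g = u * h :=
  calc g = g * g' * h := by rw [mul_right_comm, mul_assoc, hhg', hg]
    _ = u * h := by rw [h', mul_right_comm, mul_assoc, hh]

end CommMonoid

end MonoidFacts

section MinimalIdempotent

variable {M : Type*} [CommMonoid M] {H : Submonoid M}

theorem exists_isIdempotentElem_cls_pow (hfin : CStarFinite H) {y : M} (hy : NU1 y) :
    ∃ N, 0 < N ∧ IsIdempotentElem (cls H y ^ N) := by
  obtain ⟨n, f, hf⟩ := hfin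
  have hmem : ∀ k : ℕ, cls H y ^ (k + 1) ∈ Set.range (cls H ∘ f) := fun k => by
    obtain ⟨i, hi⟩ := hf _ (hy.pow (k + 1))
    exact ⟨i, by rw [Function.comp_apply, ← cls_eq_cls.2 hi, map_pow]⟩
  obtain ⟨m, m', hlt, heq⟩ := (Set.finite_range _).exists_lt_map_eq_of_forall_mem hmem
  refine ⟨(m + 1) * (m' - m), Nat.mul_pos (by omega) (by omega),
    isIdempotentElem_pow_of_pow_add_eq (by omega) ?_⟩
  rw [heq, show m + 1 + (m' - m) = m' + 1 by omega]

variable {b : M}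

theorem exists_cls_pow_eq_of_mul_eq (hfin : CStarFinite H)
    (hbmin : ∀ c : M, NU1 c → HRel H (c * c) c → HRel H (b * c) b) {c : M} (hc : NU1 c)
    (hcb : cls H c * cls H b = cls H c) : ∃ N, 0 < N ∧ cls H c ^ N = cls H b := by
  obtain ⟨N, hN, hidem⟩ := exists_isIdempotentElem_cls_pow hfin hc
  have hmin : cls H b * cls H c ^ N = cls H b := by
    have := cls_eq_cls.2 <| hbmin (c ^ N) (hc.pow N) <| cls_eq_cls.1 <| by
      rw [map_mul, map_pow, hidem.eq]
    rwa [map_mul, map_pow] at this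
  refine ⟨N, hN, ?_⟩
  rw [← pow_mul_eq_self_of_mul_eq_self hcb hN.ne', mul_comm, hmin]

theorem cls_eq_of_mem (hfin : CStarFinite H)
    (hbmin : ∀ c : M, NU1 c → HRel H (c * c) c → HRel H (b * c) b) {c : M} (hcH : c ∈ H)
    (hc : NU1 c) (hcb : cls H c * cls H b = cls H c) : cls H c = cls H b := by
  obtain ⟨_ | n, hN, hpow⟩ := exists_cls_pow_eq_of_mul_eq hfin hbmin hc hcb
  · omega
  refine cls_eq_cls.2 fun x => ⟨fun hx => ?_, fun hx => ?_⟩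
  · refine (mem_iff_of_cls_eq ?_).1 (H.mul_mem hx (H.pow_mem hcH n))
    rw [map_mul, map_mul, map_mul, map_pow, mul_assoc, ← pow_succ', hpow]
  · have hxc : x * c ^ (n + 1) ∈ H :=
      (mem_iff_of_cls_eq (by rw [map_mul, map_mul, map_pow, hpow])).2 hx
    refine (mem_iff_of_cls_eq ?_).1 (H.mul_mem hxc hcH)
    rw [map_mul, map_mul, map_pow, hpow, mul_assoc, mul_comm (cls H b), hcb, map_mul]

/-- `g ∈ φ(C_{F^×}(H,F))`, i.e. `g = [ε] + [b]` for a unit `ε`. -/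
def IsUnitClass (H : Submonoid M) (b : M) (g : (classCon H).Quotient) : Prop :=
  ∃ ε : Mˣ, g = cls H ε * cls H b

theorem isUnitClass_of_units_mul_mem (hfin : CStarFinite H)
    (hbmin : ∀ c : M, NU1 c → HRel H (c * c) c → HRel H (b * c) b) (ε : Mˣ) {t : M}
    (hεt : ↑ε * t ∈ H) (ht : ¬IsUnit t) (htb : cls H t * cls H b = cls H t) :
    IsUnitClass H b (cls H t) := by
  have h := cls_eq_of_mem hfin hbmin hεt (Or.inl ((Units.isUnit_units_mul ε t).not.2 ht))
    (by rw [map_mul, mul_assoc, htb])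
  exact ⟨ε⁻¹, by rw [← h, ← map_mul, Units.inv_mul_cancel_left]⟩

theorem IsUnitClass.pow (he : IsIdempotentElem (cls H b)) {g : (classCon H).Quotient}
    (h : IsUnitClass H b g) {n : ℕ} (hn : n ≠ 0) : IsUnitClass H b (g ^ n) := by
  obtain ⟨ε, rfl⟩ := h
  exact ⟨ε ^ n, by rw [mul_pow, he.pow_eq hn, Units.val_pow_eq_pow_val, map_pow]⟩

end MinimalIdempotent

section Constituent

variable {M : Type*} [CommMonoid M] {H : Submonoid M} {b : M}

theorem IsUnitClass.pow_of_mul_eq (he : IsIdempotentElem (cls H b))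
    {g g' : (classCon H).Quotient} (hg : g * cls H b = g) (hgg' : g * g' = cls H b) {i : ℕ}
    (hi : i ≠ 0) (h : IsUnitClass H b (g' ^ i)) : IsUnitClass H b (g ^ i) := by
  obtain ⟨ε, hε⟩ := h
  exact ⟨ε⁻¹, pow_eq_mul_of_mul_eq he hg hgg' (by rw [← map_mul, Units.inv_mul, map_one]) hi hε⟩

/-- `x ∈ (F \ F^×) ∪ {1}` represents an element of the constituent group of `[b]`. -/
structure MemConstituent (H : Submonoid M) (b x : M) : Prop where
  nu1 : NU1 x
  mul_cls : cls H x * cls H b = cls H x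
  exists_inv : ∃ z, NU1 z ∧ cls H x * cls H z = cls H b

theorem memConstituent_iff {x : M} :
    MemConstituent H b x ↔ NU1 x ∧ HRel H (x * b) x ∧ ∃ z, NU1 z ∧ HRel H (x * z) b := by
  simp only [← cls_eq_cls, map_mul]
  exact ⟨fun h => ⟨h.1, h.2, h.3⟩, fun h => ⟨h.1, h.2.1, h.2.2⟩⟩

namespace MemConstituent

variable {x y : M}

theorem mul (he : IsIdempotentElem (cls H b)) (hx : MemConstituent H b x)
    (hy : MemConstituent H b y) : MemConstituent H b (x * y) := by
  obtain ⟨x', hx', hxx'⟩ := hx.exists_inv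
  obtain ⟨y', hy', hyy'⟩ := hy.exists_inv
  refine ⟨hx.nu1.mul hy.nu1, by rw [map_mul, mul_right_comm, hx.mul_cls], x' * y', hx'.mul hy', ?_⟩
  rw [map_mul, map_mul, mul_mul_mul_comm, hxx', hyy', he.eq]

theorem exists_inv_memConstituent (he : IsIdempotentElem (cls H b)) (hb : NU1 b)
    (hx : MemConstituent H b x) :
    ∃ z, MemConstituent H b z ∧ cls H x * cls H z = cls H b := by
  obtain ⟨z, hz, hxz⟩ := hx.exists_inv
  have hxzb : cls H x * cls H (z * b) = cls H b := by rw [map_mul, ← mul_assoc, hxz, he.eq]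
  exact ⟨z * b, ⟨hz.mul hb, by rw [map_mul, mul_assoc, he.eq], x, hx.nu1, by rw [mul_comm, hxzb]⟩,
    hxzb⟩

theorem exists_hRel_units_mul (hx : MemConstituent H b x) (hy : MemConstituent H b y) {z : M}
    (hyz : cls H y * cls H z = cls H b) (h : IsUnitClass H b (cls H x * cls H z)) :
    ∃ ε : Mˣ, HRel H x (ε * y) := by
  obtain ⟨ε, hε⟩ := h
  exact ⟨ε, cls_eq_cls.1 <| by rw [map_mul, eq_mul_of_mul_eq_mul hx.mul_cls hy.mul_cls hyz hε]⟩

end MemConstituent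

end Constituent

namespace FM

open Finsupp

variable {Fu P : Type*} [CommGroup Fu]

def exponent (v : FM Fu P) : P →₀ ℕ := Multiplicative.toAdd v.2

@[simp]
theorem exponent_mul (v w : FM Fu P) : exponent (v * w) = exponent v + exponent w := rfl

theorem snd_eq_of_exponent_eq {v w : FM Fu P} (h : exponent v = exponent w) : v.2 = w.2 :=
  Multiplicative.toAdd.injective h

theorem isUnit_iff_exponent_eq_zero {v : FM Fu P} : IsUnit v ↔ exponent v = 0 := by
  rw [Prod.isUnit_iff, isUnit_iff_eq_one (a := v.2)]
  exact ⟨fun h => congrArg Multiplicative.toAdd h.2,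
    fun h => ⟨Group.isUnit _, congrArg Multiplicative.ofAdd h⟩⟩

@[simp]
theorem exponent_units (ε : (FM Fu P)ˣ) : exponent (ε : FM Fu P) = 0 :=
  isUnit_iff_exponent_eq_zero.1 ε.isUnit

theorem exponent_units_mul (ε : (FM Fu P)ˣ) (v : FM Fu P) :
    exponent ((ε : FM Fu P) * v) = exponent v := by
  simp

@[simp]
theorem exponent_primeElt (p : P) : exponent (primeElt p : FM Fu P) = single p 1 := rfl

@[simp]
theorem exponent_primeElt_pow (p : P) (n : ℕ) :
    exponent (primeElt p ^ n : FM Fu P) = single p n := by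
  induction n with
  | zero => rw [pow_zero, single_zero]; rfl
  | succ n ih => rw [pow_succ, exponent_mul, ih, exponent_primeElt, single_add]

theorem exponent_prod_primeElt [DecidableEq P] (s : Multiset P) :
    exponent (s.map (primeElt (Fu := Fu))).prod = Multiset.toFinsupp s := by
  induction s using Multiset.induction_on with
  | empty => simp; rfl
  | cons p s ih =>
    rw [Multiset.map_cons, Multiset.prod_cons, exponent_mul, ih, ← Multiset.singleton_add,
      Multiset.toFinsupp_add, Multiset.toFinsupp_singleton, exponent_primeElt]

theorem exists_units_mul_primeElt_pow {v : FM Fu P} {p : P} {n : ℕ}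
    (h : exponent v = single p n) : ∃ ε : (FM Fu P)ˣ, v = (ε : FM Fu P) * primeElt p ^ n := by
  obtain ⟨ε, hε⟩ := (isUnit_iff_exponent_eq_zero (v := ((v.1, 1) : FM Fu P))).2 rfl
  refine ⟨ε, Prod.ext ?_ (snd_eq_of_exponent_eq ?_)⟩
  · simp [hε, primeElt]
  · rw [exponent_units_mul, exponent_primeElt_pow, h]

theorem primeElt_dvd {a : FM Fu P} {p : P} (h : exponent a p ≠ 0) : primeElt p ∣ a := by
  refine ⟨(a.1, Multiplicative.ofAdd (exponent a - single p 1)), Prod.ext (by simp [primeElt]) ?_⟩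
  refine snd_eq_of_exponent_eq ?_
  rw [exponent_mul, ← pow_one (primeElt p), exponent_primeElt_pow, exponent]
  exact (add_tsub_cancel_of_le (single_le_iff.2 (Nat.one_le_iff_ne_zero.2 h))).symm

variable {H : Submonoid (FM Fu P)}

theorem atomOf_of_exponent_eq_single {z : FM Fu P} {p : P} {d : ℕ} (hzH : z ∈ H)
    (hz : exponent z = single p d) (hd : d ≠ 0)
    (hmid : ∀ i, 0 < i → i < d → ∀ ε : (FM Fu P)ˣ, (ε : FM Fu P) * primeElt p ^ i ∉ H) :
    AtomOf H z := by
  refine ⟨hzH, by simpa [isUnit_iff_exponent_eq_zero, hz] using hd, fun v w hvH _ hvw => ?_⟩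
  have hsum : exponent v + exponent w = single p d := by rw [← exponent_mul, ← hvw, hz]
  have hsingle : ∀ f : P →₀ ℕ, f ≤ single p d → f = single p (f p) := fun f hf =>
    support_subset_singleton.1 ((support_mono hf).trans support_single_subset)
  have hv := hsingle _ (hsum ▸ le_self_add)
  have hw := hsingle _ (hsum ▸ le_add_self)
  have hp : exponent v p + exponent w p = d := by
    simpa using DFunLike.congr_fun hsum p
  rw [isUnit_iff_exponent_eq_zero, isUnit_iff_exponent_eq_zero]
  by_contra! ⟨hv0, hw0⟩
  obtain ⟨ε, hε⟩ := exists_units_mul_primeElt_pow hv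
  have hv0' : exponent v p ≠ 0 := fun h => hv0 (by rw [hv, h, single_zero])
  have hw0' : exponent w p ≠ 0 := fun h => hw0 (by rw [hw, h, single_zero])
  exact hmid _ (by omega) (by omega) ε (hε ▸ hvH)

theorem atomOf_of_exponent_eq_toFinsupp [DecidableEq P] {z : FM Fu P} {s : Multiset P}
    (hzH : z ∈ H) (hz : exponent z = Multiset.toFinsupp s) (hs0 : s ≠ 0)
    (hs3 : Multiset.card s ≤ 3)
    (hmid : ∀ r ∈ s, ∀ ε : (FM Fu P)ˣ, (ε : FM Fu P) * primeElt r ∉ H) : AtomOf H z := by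
  have hdeg : degree (exponent z) = Multiset.card s := by simp [hz, degree_apply]
  have hdeg_one : ∀ v w, v ∈ H → z = v * w → degree (exponent v) ≠ 1 := by
    intro v w hvH hvw hv1
    obtain ⟨r, hr⟩ : exponent v ∈ Set.range fun r => single r 1 := range_single_one ▸ hv1
    obtain ⟨ε, hε⟩ := exists_units_mul_primeElt_pow hr.symm
    refine hmid r ?_ ε (by rwa [← pow_one (primeElt r), ← hε])
    have : exponent z r ≠ 0 := by
      rw [hvw, exponent_mul, ← hr]
      simp
    simpa [hz] using this
  refine ⟨hzH, fun h => hs0 ?_, fun v w hvH hwH hvw => ?_⟩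
  · rwa [← Multiset.card_eq_zero, ← hdeg, degree_eq_zero_iff, ← isUnit_iff_exponent_eq_zero]
  rw [isUnit_iff_exponent_eq_zero, isUnit_iff_exponent_eq_zero, ← degree_eq_zero_iff,
    ← degree_eq_zero_iff]
  have := hdeg_one v w hvH hvw
  have := hdeg_one w v hwH (hvw.trans (mul_comm v w))
  rw [hvw, exponent_mul, map_add] at hdeg
  omega

end FM

section Setup

open FM

variable {Fu P : Type*} [CommGroup Fu]

structure MinIdempotentSetup (H : Submonoid (FM Fu P)) (b : FM Fu P) : Prop where
  finite : CStarFinite H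
  dense : DenseSub H
  primes : ∀ y : FM Fu P, NU1 y → ∃ p : P, HRel H y (primeElt p)
  nu1 : NU1 b
  idem : HRel H (b * b) b
  minimal : ∀ c : FM Fu P, NU1 c → HRel H (c * c) c → HRel H (b * c) b

namespace MinIdempotentSetup

variable {H : Submonoid (FM Fu P)} {b : FM Fu P}

theorem isIdempotentElem (S : MinIdempotentSetup H b) : IsIdempotentElem (cls H b) := by
  rw [IsIdempotentElem, ← map_mul]
  exact cls_eq_cls.2 S.idem

theorem exists_cls_primeElt (S : MinIdempotentSetup H b) {y : FM Fu P} (hy : NU1 y) :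
    ∃ p, cls H (primeElt p) = cls H y := by
  obtain ⟨p, hp⟩ := S.primes y hy
  exact ⟨p, (cls_eq_cls.2 hp).symm⟩

theorem mem_of_cls_eq (S : MinIdempotentSetup H b) {x : FM Fu P} (hx : cls H x = cls H b) :
    x ∈ H := by
  obtain ⟨q, hq⟩ := S.exists_cls_primeElt S.nu1
  obtain ⟨k, hk, hk0⟩ := (S.dense q).infinite_compl.exists_gt 0
  obtain ⟨a, haH, hak⟩ : ∃ a ∈ H, exponent a q = k := by
    by_contra! h
    exact hk h
  have ha : NU1 a := Or.inl fun h => by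
    rw [isUnit_iff_exponent_eq_zero] at h
    rw [h] at hak
    exact hk0.ne hak
  obtain ⟨w, rfl⟩ := primeElt_dvd (hak ▸ hk0.ne')
  have hab : cls H (primeElt q * w) * cls H b = cls H (primeElt q * w) := by
    rw [map_mul, hq, mul_right_comm, S.isIdempotentElem.eq]
  obtain ⟨N, -, hN⟩ := exists_cls_pow_eq_of_mul_eq S.finite S.minimal ha hab
  exact (mem_iff_of_cls_eq (by rw [hx, map_pow, hN])).2 (H.pow_mem haH N)

theorem units_mul_primeElt_pow_not_mem (S : MinIdempotentSetup H b) {x : FM Fu P}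
    (hx : cls H x * cls H b = cls H x) {p : P} (hp : cls H (primeElt p) = cls H x) {i : ℕ}
    (hi : i ≠ 0) (hxi : ¬IsUnitClass H b (cls H x ^ i)) (ε : (FM Fu P)ˣ) :
    (ε : FM Fu P) * primeElt p ^ i ∉ H := fun hmem => hxi <| by
  have hp' : ¬IsUnit (primeElt p ^ i : FM Fu P) := by
    rw [isUnit_iff_exponent_eq_zero, exponent_primeElt_pow]
    exact Finsupp.single_ne_zero.2 hi
  simpa only [map_pow, hp] using isUnitClass_of_units_mul_mem S.finite S.minimal ε hmem hp'
    (by rw [map_pow, hp, pow_mul_eq_self_of_mul_eq_self hx hi])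

theorem atomOf_units_mul_primeElt_pow (S : MinIdempotentSetup H b) {x : FM Fu P}
    (hx : cls H x * cls H b = cls H x) {p : P} (hp : cls H (primeElt p) = cls H x) {d : ℕ}
    (hd : d ≠ 0) (hmin : ∀ i, 0 < i → i < d → ¬IsUnitClass H b (cls H x ^ i))
    {ε : (FM Fu P)ˣ} (hε : cls H ε * cls H x ^ d = cls H b) :
    AtomOf H ((ε : FM Fu P) * primeElt p ^ d) :=
  atomOf_of_exponent_eq_single (S.mem_of_cls_eq (by rw [map_mul, map_pow, hp, hε])) (by simp) hd
    fun i hi hid δ => S.units_mul_primeElt_pow_not_mem hx hp hi.ne' (hmin i hi hid) δ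

theorem atomOf_units_mul_primeElt_sq (S : MinIdempotentSetup H b) {p : P}
    (hp : cls H (primeElt p) * cls H b = cls H (primeElt p))
    (hn : ¬IsUnitClass H b (cls H (primeElt p))) {ε : (FM Fu P)ˣ}
    (hε : cls H ε * cls H (primeElt p) ^ 2 = cls H b) :
    AtomOf H ((ε : FM Fu P) * primeElt p ^ 2) :=
  S.atomOf_units_mul_primeElt_pow hp rfl two_ne_zero
    (fun i hi hi2 => by rwa [show i = 1 by omega, pow_one]) hε

theorem atomOf_units_mul_prod_primeElt (S : MinIdempotentSetup H b) [DecidableEq P]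
    {s : Multiset P} (hs0 : s ≠ 0) (hs3 : Multiset.card s ≤ 3)
    (hs : ∀ r ∈ s, cls H (primeElt r) * cls H b = cls H (primeElt r) ∧
      ¬IsUnitClass H b (cls H (primeElt r)))
    {ε : (FM Fu P)ˣ} (hε : cls H ε * cls H (s.map primeElt).prod = cls H b) :
    AtomOf H ((ε : FM Fu P) * (s.map primeElt).prod) :=
  atomOf_of_exponent_eq_toFinsupp (S.mem_of_cls_eq (by rw [map_mul, hε]))
    (by rw [exponent_units_mul, exponent_prod_primeElt]) hs0 hs3 fun r hr δ => by
      simpa using S.units_mul_primeElt_pow_not_mem (hs r hr).1 rfl one_ne_zero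
        (by simpa using (hs r hr).2) δ

theorem le_two_of_isUnitClass_pow (S : MinIdempotentSetup H b) (hhf : HalfFactorialSub H)
    {x : FM Fu P} (hx : MemConstituent H b x) {d : ℕ} (hxd : IsUnitClass H b (cls H x ^ d))
    (hmin : ∀ i, 0 < i → i < d → ¬IsUnitClass H b (cls H x ^ i)) : d ≤ 2 := by
  by_contra! hd
  classical
  have he := S.isIdempotentElem
  obtain ⟨x', hx', hxx'⟩ := hx.exists_inv_memConstituent he S.nu1
  have hmin' : ∀ i, 0 < i → i < d → ¬IsUnitClass H b (cls H x' ^ i) := fun i hi hid h =>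
    hmin i hi hid (h.pow_of_mul_eq he hx.mul_cls hxx' hi.ne')
  obtain ⟨p, hp⟩ := S.exists_cls_primeElt hx.nu1
  obtain ⟨q, hq⟩ := S.exists_cls_primeElt hx'.nu1
  obtain ⟨ε, hε⟩ := hxd
  have hεε : cls H ↑ε⁻¹ * cls H ↑ε = 1 := by rw [← map_mul, Units.inv_mul, map_one]
  have hx'd : cls H x' ^ d = cls H ↑ε⁻¹ * cls H b :=
    pow_eq_mul_of_mul_eq he hx'.mul_cls (by rw [mul_comm, hxx']) hεε (by omega) hε
  -- `(ε⁻¹ p^d) (ε q^d) = (p q)^d` has factorizations of lengths 2 and d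
  have hw := S.atomOf_units_mul_primeElt_pow hx.mul_cls hp (by omega) hmin
    (ε := ε⁻¹) (by rw [hε, ← map_mul, ← map_mul, Units.inv_mul_cancel_left])
  have hw' := S.atomOf_units_mul_primeElt_pow hx'.mul_cls hq (by omega) hmin'
    (ε := ε) (by rw [hx'd, ← mul_assoc, ← map_mul, Units.mul_inv, map_one, one_mul])
  have hv := S.atomOf_units_mul_prod_primeElt (s := {p, q}) (ε := 1) (by simp) (by simp)
    (by
      simp only [Multiset.insert_eq_cons, Multiset.mem_cons, Multiset.mem_singleton]
      rintro r (rfl | rfl)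
      · exact ⟨by rw [hp, hx.mul_cls], by simpa [hp] using hmin 1 one_pos (by omega)⟩
      · exact ⟨by rw [hq, hx'.mul_cls], by simpa [hq] using hmin' 1 one_pos (by omega)⟩)
    (by simp [hp, hq, hxx'])
  have hlen := hhf.2 [_, _] (List.replicate d _)
    (List.forall_mem_cons.2 ⟨hw, List.forall_mem_cons.2 ⟨hw', by simp⟩⟩)
    (fun y hy => List.eq_of_mem_replicate hy ▸ hv) <| by
    simp only [List.prod_cons, List.prod_nil, mul_one, List.prod_replicate,
      Multiset.insert_eq_cons, Multiset.map_cons, Multiset.map_singleton, Multiset.prod_cons,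
      Multiset.prod_singleton, Units.val_one, one_mul, mul_pow]
    rw [mul_mul_mul_comm, Units.inv_mul, one_mul]
  simp at hlen
  omega

theorem isUnitClass_sq (S : MinIdempotentSetup H b) (hhf : HalfFactorialSub H) {x : FM Fu P}
    (hx : MemConstituent H b x) : IsUnitClass H b (cls H x ^ 2) := by
  classical
  have hex : ∃ d, 0 < d ∧ IsUnitClass H b (cls H x ^ d) := by
    obtain ⟨N, hN, hxN⟩ := exists_cls_pow_eq_of_mul_eq S.finite S.minimal hx.nu1 hx.mul_cls
    exact ⟨N, hN, 1, by rw [hxN, Units.val_one, map_one, one_mul]⟩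
  obtain ⟨hd0, hd⟩ := Nat.find_spec hex
  have hd2 := S.le_two_of_isUnitClass_pow hhf hx hd fun i hi hid h => Nat.find_min hex hid ⟨hi, h⟩
  obtain h | h : Nat.find hex = 1 ∨ Nat.find hex = 2 := by omega
  · simpa [h] using hd.pow S.isIdempotentElem two_ne_zero
  · rwa [h] at hd

theorem false_of_klein_primeElt (S : MinIdempotentSetup H b) (hhf : HalfFactorialSub H)
    {p₁ p₂ p₃ : P} (hb₁ : cls H (primeElt p₁) * cls H b = cls H (primeElt p₁))
    (hb₂ : cls H (primeElt p₂) * cls H b = cls H (primeElt p₂))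
    (hb₃ : cls H (primeElt p₃) * cls H b = cls H (primeElt p₃))
    (hn₁ : ¬IsUnitClass H b (cls H (primeElt p₁))) (hn₂ : ¬IsUnitClass H b (cls H (primeElt p₂)))
    (hn₃ : ¬IsUnitClass H b (cls H (primeElt p₃))) {ε₁ ε₂ ε₃ : (FM Fu P)ˣ}
    (hε₁ : cls H ε₁ * cls H (primeElt p₁) ^ 2 = cls H b)
    (hε₂ : cls H ε₂ * cls H (primeElt p₂) ^ 2 = cls H b)
    (hε₃ : cls H ε₃ * cls H (primeElt p₃) ^ 2 = cls H b)
    (hprod : cls H (primeElt p₁) * cls H (primeElt p₂) * cls H (primeElt p₃) = cls H b) :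
    False := by
  classical
  have he := S.isIdempotentElem
  -- `ε₁p₁² · ε₂p₂² · ε₃p₃² = (ε₁ε₂ε₃ D) D` with `D = p₁p₂p₃`: factorizations of lengths 3 and 2
  set D : FM Fu P := (({p₁, p₂, p₃} : Multiset P).map primeElt).prod
  have hprodeq : (ε₁ : FM Fu P) * primeElt p₁ ^ 2 * ((ε₂ : FM Fu P) * primeElt p₂ ^ 2) *
      ((ε₃ : FM Fu P) * primeElt p₃ ^ 2) =
      ((ε₁ * ε₂ * ε₃ : (FM Fu P)ˣ) : FM Fu P) * D * (((1 : (FM Fu P)ˣ) : FM Fu P) * D) := by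
    simp only [D, Multiset.insert_eq_cons, Multiset.map_cons, Multiset.map_singleton,
      Multiset.prod_cons, Multiset.prod_singleton, Units.val_mul, Units.val_one, one_mul, sq]
    ac_rfl
  have hD : cls H D = cls H b := by simp [D, ← mul_assoc, hprod]
  have hμD : cls H ((ε₁ * ε₂ * ε₃ : (FM Fu P)ˣ) : FM Fu P) * cls H D = cls H b := by
    have := congrArg (cls H) hprodeq
    simp only [map_mul, map_pow, hε₁, hε₂, hε₃, he.eq, hD, Units.val_one, one_mul] at this
    rw [hD]
    exact (this.trans (by rw [mul_assoc, he.eq])).symm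
  have hs : ∀ r ∈ ({p₁, p₂, p₃} : Multiset P), cls H (primeElt r) * cls H b =
      cls H (primeElt r) ∧ ¬IsUnitClass H b (cls H (primeElt r)) := by
    simp only [Multiset.insert_eq_cons, Multiset.mem_cons, Multiset.mem_singleton]
    rintro r (rfl | rfl | rfl)
    exacts [⟨hb₁, hn₁⟩, ⟨hb₂, hn₂⟩, ⟨hb₃, hn₃⟩]
  have hlen := hhf.2 [_, _, _] [_, _]
    (by
      simp only [List.forall_mem_cons]
      exact ⟨S.atomOf_units_mul_primeElt_sq hb₁ hn₁ hε₁, S.atomOf_units_mul_primeElt_sq hb₂ hn₂ hε₂,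
        S.atomOf_units_mul_primeElt_sq hb₃ hn₃ hε₃, by simp⟩)
    (by
      simp only [List.forall_mem_cons]
      exact ⟨S.atomOf_units_mul_prod_primeElt (by simp) (by simp) hs hμD,
        S.atomOf_units_mul_prod_primeElt (by simp) (by simp) hs
          (by rw [hD, Units.val_one, map_one, one_mul]), by simp⟩)
    (by simpa only [List.prod_cons, List.prod_nil, mul_one, mul_assoc] using hprodeq)
  simp at hlen

theorem false_of_klein (S : MinIdempotentSetup H b) (hhf : HalfFactorialSub H)
    {x₁ x₂ x₃ : FM Fu P} (h₁ : MemConstituent H b x₁) (h₂ : MemConstituent H b x₂)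
    (h₃ : MemConstituent H b x₃) (hprod : cls H x₁ * cls H x₂ * cls H x₃ = cls H b)
    (hn₁ : ¬IsUnitClass H b (cls H x₁)) (hn₂ : ¬IsUnitClass H b (cls H x₂))
    (hn₃ : ¬IsUnitClass H b (cls H x₃)) (hs₁ : IsUnitClass H b (cls H x₁ ^ 2))
    (hs₂ : IsUnitClass H b (cls H x₂ ^ 2)) (hs₃ : IsUnitClass H b (cls H x₃ ^ 2)) : False := by
  have hinv : ∀ {y : FM Fu P}, IsUnitClass H b (cls H y ^ 2) →
      ∃ ε : (FM Fu P)ˣ, cls H ε * cls H y ^ 2 = cls H b := fun ⟨ε, h⟩ =>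
    ⟨ε⁻¹, by rw [h, ← map_mul, ← map_mul, Units.inv_mul_cancel_left]⟩
  obtain ⟨ε₁, hε₁⟩ := hinv hs₁
  obtain ⟨ε₂, hε₂⟩ := hinv hs₂
  obtain ⟨ε₃, hε₃⟩ := hinv hs₃
  obtain ⟨p₁, hp₁⟩ := S.exists_cls_primeElt h₁.nu1
  obtain ⟨p₂, hp₂⟩ := S.exists_cls_primeElt h₂.nu1
  obtain ⟨p₃, hp₃⟩ := S.exists_cls_primeElt h₃.nu1
  rw [← hp₁] at hprod hε₁ hn₁
  rw [← hp₂] at hprod hε₂ hn₂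
  rw [← hp₃] at hprod hε₃ hn₃
  exact S.false_of_klein_primeElt hhf (by rw [hp₁, h₁.mul_cls]) (by rw [hp₂, h₂.mul_cls])
    (by rw [hp₃, h₃.mul_cls]) hn₁ hn₂ hn₃ hε₁ hε₂ hε₃ hprod

end MinIdempotentSetup

end Setup

theorem stmt_17_general {Fu P : Type*} [CommGroup Fu] (H : Submonoid (FM Fu P))
    (hfin : CStarFinite H)
    (hdense : DenseSub H)
    (hprimes : ∀ y : FM Fu P, NU1 y → ∃ p : P, HRel H y (primeElt p))
    (b : FM Fu P) (hb : NU1 b) (hbid : HRel H (b * b) b)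
    (hbmin : ∀ c : FM Fu P, NU1 c → HRel H (c * c) c → HRel H (b * c) b)
    (hhf : HalfFactorialSub H) :
    ∀ a₁ a₂ a₃ : FM Fu P,
      (NU1 a₁ ∧ HRel H (a₁ * b) a₁ ∧ ∃ z, NU1 z ∧ HRel H (a₁ * z) b) →
      (NU1 a₂ ∧ HRel H (a₂ * b) a₂ ∧ ∃ z, NU1 z ∧ HRel H (a₂ * z) b) →
      (NU1 a₃ ∧ HRel H (a₃ * b) a₃ ∧ ∃ z, NU1 z ∧ HRel H (a₃ * z) b) →
      (∃ ε : (FM Fu P)ˣ, HRel H a₁ ((ε : FM Fu P) * a₂)) ∨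
      (∃ ε : (FM Fu P)ˣ, HRel H a₁ ((ε : FM Fu P) * a₃)) ∨
      (∃ ε : (FM Fu P)ˣ, HRel H a₂ ((ε : FM Fu P) * a₃)) := by
  intro a₁ a₂ a₃ h₁ h₂ h₃
  have S : MinIdempotentSetup H b := ⟨hfin, hdense, hprimes, hb, hbid, hbmin⟩
  have he := S.isIdempotentElem
  replace h₁ := memConstituent_iff.2 h₁
  replace h₂ := memConstituent_iff.2 h₂
  replace h₃ := memConstituent_iff.2 h₃
  obtain ⟨z₁, hz₁, hz₁'⟩ := h₁.exists_inv_memConstituent he hb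
  obtain ⟨z₂, hz₂, hz₂'⟩ := h₂.exists_inv_memConstituent he hb
  obtain ⟨z₃, hz₃, hz₃'⟩ := h₃.exists_inv_memConstituent he hb
  by_contra! ⟨h₁₂, h₁₃, h₂₃⟩
  have hn : ∀ {a a' z : FM Fu P}, MemConstituent H b a → MemConstituent H b a' →
      cls H a' * cls H z = cls H b → (∀ ε : (FM Fu P)ˣ, ¬HRel H a (ε * a')) →
      ¬IsUnitClass H b (cls H (a * z)) := fun ha ha' hz hne h => by
    obtain ⟨ε, hε⟩ := ha.exists_hRel_units_mul ha' hz (by rwa [← map_mul])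
    exact hne ε hε
  -- the classes of `a₁z₂`, `a₂z₃`, `a₃z₁` would generate a Klein four-group modulo unit classes
  refine S.false_of_klein hhf (h₁.mul he hz₂) (h₂.mul he hz₃) (h₃.mul he hz₁) ?_
    (hn h₁ h₂ hz₂' h₁₂) (hn h₂ h₃ hz₃' h₂₃) (hn h₃ h₁ hz₁' fun ε hε => h₁₃ ε⁻¹ ?_)
    (S.isUnitClass_sq hhf (h₁.mul he hz₂)) (S.isUnitClass_sq hhf (h₂.mul he hz₃))
    (S.isUnitClass_sq hhf (h₃.mul he hz₁))
  · calc cls H (a₁ * z₂) * cls H (a₂ * z₃) * cls H (a₃ * z₁)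
        = cls H a₁ * cls H z₁ * (cls H a₂ * cls H z₂) * (cls H a₃ * cls H z₃) := by
          simp only [map_mul]; ac_rfl
      _ = cls H b := by rw [hz₁', hz₂', hz₃', he.eq, he.eq]
  · exact cls_eq_cls.1 (by rw [map_mul, cls_eq_cls.2 hε, ← map_mul, Units.inv_mul_cancel_left])

/-- Let `H ⊆ F` be a dense seminormal C-monoid such that every class of
`C*(H,F)` contains a prime of `F`, and let `b` represent the smallest
idempotent `eₙ = e₀ + ... + eₙ` of `C*(H,F)`.  If `H` is half-factorial, then
the quotient group `Cₙ*/φₙ(C_{F^×}(H,F))` has at most two elements, where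
`Cₙ*` is the constituent group of `eₙ` and `φₙ([ε]) = [ε] + eₙ`: among any
three elements `[a₁], [a₂], [a₃]` of `Cₙ*`, two differ by the class of a unit
`ε ∈ F^×` (note `[ε] + [a] = [ε] + eₙ + [a]` for `[a] ∈ Cₙ*`). -/
theorem stmt_17 {Fu P : Type*} [CommGroup Fu] (H : Submonoid (FM Fu P))
    (hux : UnitsCond H) (hfin : CStarFinite H) (hsn : SeminormalSub H)
    (hdense : DenseSub H)
    (hprimes : ∀ y : FM Fu P, NU1 y → ∃ p : P, HRel H y (primeElt p))
    (b : FM Fu P) (hb : NU1 b) (hbid : HRel H (b * b) b)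
    (hbmin : ∀ c : FM Fu P, NU1 c → HRel H (c * c) c → HRel H (b * c) b)
    (hhf : HalfFactorialSub H) :
    ∀ a₁ a₂ a₃ : FM Fu P,
      (NU1 a₁ ∧ HRel H (a₁ * b) a₁ ∧ ∃ z, NU1 z ∧ HRel H (a₁ * z) b) →
      (NU1 a₂ ∧ HRel H (a₂ * b) a₂ ∧ ∃ z, NU1 z ∧ HRel H (a₂ * z) b) →
      (NU1 a₃ ∧ HRel H (a₃ * b) a₃ ∧ ∃ z, NU1 z ∧ HRel H (a₃ * z) b) →
      (∃ ε : (FM Fu P)ˣ, HRel H a₁ ((ε : FM Fu P) * a₂)) ∨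
      (∃ ε : (FM Fu P)ˣ, HRel H a₁ ((ε : FM Fu P) * a₃)) ∨
      (∃ ε : (FM Fu P)ˣ, HRel H a₂ ((ε : FM Fu P) * a₃)) :=
  stmt_17_general H hfin hdense hprimes b hb hbid hbmin hhf
end

section
/- Let G be an abelian group, the 'block monoid' B(G) the set of finite sequences over G (elements of the free abelian monoid ℱ(G)) whose sum is zero. Then B(G) is half-factorial if and only if |G| ≤ 2. -/
/-- The sum `σ(S)` of a sequence `S` over `G` (an element of the free abelian
monoid `ℱ(G) = G →₀ ℕ`). -/
def seqSum {G : Type*} [AddCommGroup G] (S : G →₀ ℕ) : G :=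
  S.sum fun g n => n • g

/-- The block monoid `B(G)` of zero-sum sequences over `G`. -/
def BlockSet (G : Type*) [AddCommGroup G] : Set (G →₀ ℕ) :=
  {S | seqSum S = 0}

/-- `S` is an atom of `B(G)`. -/
def BlockAtom {G : Type*} [AddCommGroup G] (S : G →₀ ℕ) : Prop :=
  S ∈ BlockSet G ∧ S ≠ 0 ∧
    ∀ u v : G →₀ ℕ, u ∈ BlockSet G → v ∈ BlockSet G → S = u + v →
      u = 0 ∨ v = 0
/-!
If `|G| ≤ 2`, the only atoms of `B(G)` are `0` and `g²` for `g ≠ 0`, so the additive weight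
counting `0` twice and every other term once takes the value `2` on each atom, and the length of
any factorization of `S` is half the weight of `S`.

Conversely, suppose `g, h ≠ 0` with `g + h ≠ 0` (such a pair exists as soon as `|G| ≥ 3`). With
`k = -(g + h)`, the sequences `ghk`, `(-g)(-h)(-k)` and `y(-y)` for `y ∈ {g, h, k}` are atoms,
and `(ghk)·((-g)(-h)(-k)) = (g(-g))·(h(-h))·(k(-k))` has factorizations of lengths `2` and `3`.
-/

open Finsupp

theorem Cardinal.mk_le_two_iff {α : Type*} (a : α) :
    Cardinal.mk α ≤ 2 ↔ ∀ x y : α, x ≠ a → y ≠ a → x = y := by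
  rw [← Cardinal.mk_sum_compl {a}, Cardinal.mk_singleton, add_comm, ← one_add_one_eq_two,
    Cardinal.add_one_le_add_one_iff, Cardinal.mk_le_one_iff_set_subsingleton]
  exact ⟨fun h x y hx hy => h hx hy, fun h x hx y hy => h x y hx hy⟩

section BlockMonoid

variable {G : Type*} [AddCommGroup G]

theorem mem_blockSet {S : G →₀ ℕ} : S ∈ BlockSet G ↔ seqSum S = 0 := Iff.rfl

theorem seqSum_eq_sum_toMultiset (S : G →₀ ℕ) : seqSum S = (toMultiset S).sum :=
  (sum_toMultiset S).symm

theorem seqSum_add (S T : G →₀ ℕ) : seqSum (S + T) = seqSum S + seqSum T := by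
  simp [seqSum_eq_sum_toMultiset, toMultiset_add]

theorem seqSum_single (g : G) (n : ℕ) : seqSum (single g n) = n • g := by
  simp [seqSum]

theorem tsub_mem_blockSet {S T : G →₀ ℕ} (hS : S ∈ BlockSet G) (hT : T ∈ BlockSet G)
    (hTS : T ≤ S) : S - T ∈ BlockSet G := by
  rw [mem_blockSet] at *
  rwa [← add_tsub_cancel_of_le hTS, seqSum_add, hT, zero_add] at hS

theorem exists_list_blockAtom_sum (S : G →₀ ℕ) (hS : S ∈ BlockSet G) (hS0 : S ≠ 0) :
    ∃ l : List (G →₀ ℕ), (∀ x ∈ l, BlockAtom x) ∧ S = l.sum := by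
  induction S using WellFounded.induction (Finsupp.lt_wf G) with
  | _ S ih =>
  by_cases hA : BlockAtom S
  · exact ⟨[S], by simpa, by simp⟩
  obtain ⟨u, v, hu, hv, rfl, hu0, hv0⟩ :
      ∃ u v, u ∈ BlockSet G ∧ v ∈ BlockSet G ∧ S = u + v ∧ u ≠ 0 ∧ v ≠ 0 := by
    simpa [BlockAtom, hS, hS0] using hA
  obtain ⟨l, hl, rfl⟩ := ih u (lt_add_of_pos_right u (pos_iff_ne_zero.2 hv0)) hu hu0
  obtain ⟨l', hl', rfl⟩ := ih v (lt_add_of_pos_left v (pos_iff_ne_zero.2 hu0)) hv hv0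
  exact ⟨l ++ l', List.forall_mem_append.2 ⟨hl, hl'⟩, List.sum_append.symm⟩

theorem BlockAtom.eq_of_le {S T : G →₀ ℕ} (hS : BlockAtom S) (hT : T ∈ BlockSet G)
    (hT0 : T ≠ 0) (hTS : T ≤ S) : T = S := by
  obtain ⟨hSB, -, hirr⟩ := hS
  have hST : S = T + (S - T) := (add_tsub_cancel_of_le hTS).symm
  rcases hirr T (S - T) hT (tsub_mem_blockSet hSB hT hTS) hST with h | h
  · exact absurd h hT0
  · rw [h, add_zero] at hST
    exact hST.symm

theorem blockAtom_of_card_le {S : G →₀ ℕ} (hS : (toMultiset S).sum = 0) (hS0 : S ≠ 0)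
    (hmin : ∀ t ≤ toMultiset S, t ≠ 0 → t.sum = 0 →
      Multiset.card (toMultiset S) ≤ Multiset.card t) :
    BlockAtom S := by
  classical
  have hinj : Function.Injective (toMultiset : (G →₀ ℕ) → Multiset G) :=
    Multiset.toFinsupp.symm.injective
  refine ⟨by rwa [mem_blockSet, seqSum_eq_sum_toMultiset], hS0, fun u v hu _ huv => ?_⟩
  rw [mem_blockSet, seqSum_eq_sum_toMultiset] at hu
  by_cases hu0 : u = 0
  · exact .inl hu0
  have hle : toMultiset u ≤ toMultiset S := by
    rw [huv, toMultiset_add]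
    exact Multiset.le_add_right _ _
  have hcard := hmin _ hle ((map_ne_zero_iff _ hinj).2 hu0) hu
  rw [huv, toMultiset_add, Multiset.card_add] at hcard
  exact .inr ((map_eq_zero_iff _ hinj).1 (Multiset.card_eq_zero.1 (by omega)))

theorem blockAtom_single_add_single_neg {g : G} (hg : g ≠ 0) :
    BlockAtom (single g 1 + single (-g) 1) := by
  refine blockAtom_of_card_le (by simp [toMultiset_add]) (by simp) ?_
  simp_rw [← Multiset.mem_powerset]
  simp [toMultiset_add, Multiset.powerset_cons, or_imp, forall_and, hg]

theorem blockAtom_triple {g h : G} (hg : g ≠ 0) (hh : h ≠ 0) (hgh : g + h ≠ 0) :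
    BlockAtom (single g 1 + single h 1 + single (-(g + h)) 1) := by
  have hhg : -h + -g ≠ 0 := by rwa [← neg_add_rev, neg_ne_zero]
  refine blockAtom_of_card_le (by simp [toMultiset_add]) (by simp) ?_
  simp_rw [← Multiset.mem_powerset]
  simp [toMultiset_add, Multiset.powerset_cons, or_imp, forall_and, hg, hh, hgh, hhg]

theorem exists_factorizations_length_ne {g h : G} (hg : g ≠ 0) (hh : h ≠ 0) (hgh : g + h ≠ 0) :
    ∃ l l' : List (G →₀ ℕ), (∀ x ∈ l, BlockAtom x) ∧ (∀ x ∈ l', BlockAtom x) ∧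
      l.sum = l'.sum ∧ l.length ≠ l'.length := by
  have hgh_neg : -g + -h ≠ 0 := by rwa [← neg_add, neg_ne_zero]
  refine ⟨[single g 1 + single h 1 + single (-(g + h)) 1,
      single (-g) 1 + single (-h) 1 + single (-(-g + -h)) 1],
    [single g 1 + single (-g) 1, single h 1 + single (-h) 1,
      single (g + h) 1 + single (-(g + h)) 1], ?_, ?_, ?_, by simp⟩
  · simp only [List.forall_mem_cons, List.not_mem_nil, IsEmpty.forall_iff, implies_true, and_true]
    exact ⟨blockAtom_triple hg hh hgh,
      blockAtom_triple (neg_ne_zero.2 hg) (neg_ne_zero.2 hh) hgh_neg⟩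
  · simp only [List.forall_mem_cons, List.not_mem_nil, IsEmpty.forall_iff, implies_true, and_true]
    exact ⟨blockAtom_single_add_single_neg hg, blockAtom_single_add_single_neg hh,
      blockAtom_single_add_single_neg hgh⟩
  · simp only [List.sum_cons, List.sum_nil, show -(-g + -h) = g + h by abel]
    abel

theorem exists_ne_zero_add_ne_zero {g h : G} (hg : g ≠ 0) (hh : h ≠ 0) (hgh : g ≠ h) :
    ∃ a b : G, a ≠ 0 ∧ b ≠ 0 ∧ a + b ≠ 0 := by
  by_cases hs : g + h = 0
  · exact ⟨g, g, hg, hg, fun hgg => hgh (add_left_cancel (hgg.trans hs.symm))⟩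
  · exact ⟨g, h, hg, hh, hs⟩

/-- When `|G| ≤ 2` this is twice the cross number `∑ 1 / ord(g)`. -/
noncomputable def crossWeight : (G →₀ ℕ) →+ ℕ := degree + applyAddHom 0

theorem crossWeight_eq_two (hG : ∀ g h : G, g ≠ 0 → h ≠ 0 → g = h) {S : G →₀ ℕ}
    (hS : BlockAtom S) : crossWeight S = 2 := by
  by_cases h0 : S 0 = 0
  · obtain ⟨g, hg⟩ : ∃ g, S g ≠ 0 := by
      by_contra! h
      exact hS.2.1 (Finsupp.ext h)
    have hg0 : g ≠ 0 := by
      rintro rfl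
      exact hg h0
    have hSg : S = single g (S g) := by
      refine eq_single_iff.2 ⟨fun x hx => ?_, rfl⟩
      refine Finset.mem_singleton.2 (hG x g ?_ hg0)
      rintro rfl
      exact mem_support_iff.1 hx h0
    have hgg : g + g = 0 := by
      by_contra h
      exact hg0 (add_eq_left.1 (hG _ _ h hg0))
    have hS1 : S g ≠ 1 := by
      intro h1
      have := hS.1
      rw [hSg, h1, mem_blockSet, seqSum_single, one_smul] at this
      exact hg0 this
    have hS2 : single g 2 = S :=
      hS.eq_of_le (by simp [mem_blockSet, seqSum_single, two_nsmul, hgg]) (by simp)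
        (by rw [single_le_iff]; omega)
    simp [← hS2, crossWeight, hg0]
  · have hS1 : single 0 1 = S :=
      hS.eq_of_le (by simp [mem_blockSet, seqSum_single]) (by simp)
        (by rw [single_le_iff]; omega)
    simp [← hS1, crossWeight]

theorem crossWeight_list_sum (hG : ∀ g h : G, g ≠ 0 → h ≠ 0 → g = h) {l : List (G →₀ ℕ)}
    (hl : ∀ x ∈ l, BlockAtom x) : crossWeight l.sum = 2 * l.length := by
  rw [map_list_sum, List.map_congr_left (fun x hx => crossWeight_eq_two hG (hl x hx)),
    List.map_const', List.sum_replicate, smul_eq_mul, mul_comm]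

end BlockMonoid

/-- `B(G)` is half-factorial if and only if `|G| ≤ 2`.  Half-factorial means:
`B(G)` is atomic and any two factorizations of an element of `B(G)` into atoms
have the same length. -/
theorem stmt_18 {G : Type*} [AddCommGroup G] :
    ((∀ S ∈ BlockSet G, S ≠ 0 →
        ∃ l : List (G →₀ ℕ), (∀ x ∈ l, BlockAtom x) ∧ S = l.sum) ∧
      ∀ l l' : List (G →₀ ℕ), (∀ x ∈ l, BlockAtom x) → (∀ x ∈ l', BlockAtom x) →
        l.sum = l'.sum → l.length = l'.length) ↔
    Cardinal.mk G ≤ 2 := by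
  rw [Cardinal.mk_le_two_iff 0]
  constructor
  · rintro ⟨-, hlen⟩ g h hg hh
    by_contra hgh
    obtain ⟨a, b, ha, hb, hab⟩ := exists_ne_zero_add_ne_zero hg hh hgh
    obtain ⟨l, l', hl, hl', hsum, hne⟩ := exists_factorizations_length_ne ha hb hab
    exact hne (hlen l l' hl hl' hsum)
  · intro hG
    refine ⟨exists_list_blockAtom_sum, fun l l' hl hl' hsum => ?_⟩
    have hweight := crossWeight_list_sum hG hl
    rw [hsum, crossWeight_list_sum hG hl'] at hweight
    omega
end
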